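/- arXiv:2107.06201 — 5 statements merged into one kernel-verified Lean document; each statement's English description precedes it below -/
import Mathlib

section
/- For positive integers $r$, $s$ with $L = rs$, let $C_L$ be $1/2$ times the Laplacian of the cycle graph on $L$ vertices, and let $D$ be the $L \times L$ diagonal matrix with ones at positions $ks$ for $k = 0, \ldots, r-1$ and zeros elsewhere. Then the smallest eigenvalue of $C_L + D$ is at least $\frac{1}{8}(1 - \cos(\pi/(2s+1)))$. -/
open Matrix

/-- Half the Laplacian of the cycle graph on `L` vertices. -/
noncomputable def cycleMat (L : ℕ) : Matrix (Fin L) (Fin L) ℝ :=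
  Matrix.of fun i j =>
    if i = j then 1
    else (if (i.val + 1) % L = j.val then -(1/2 : ℝ) else 0) +
         (if (j.val + 1) % L = i.val then -(1/2 : ℝ) else 0)

/-- Diagonal matrix with ones exactly at the diagonal positions that are multiples of `s`. -/
noncomputable def periodicDiag (L s : ℕ) : Matrix (Fin L) (Fin L) ℝ :=
  Matrix.of fun i j => if i = j ∧ s ∣ i.val then 1 else 0

/-!
The Rayleigh quotient of `C_L + D` at `v` is `(E / 2 + P) / N`, where `N = ∑ vᵢ²`,
`E = ∑ (vᵢ₊₁ - vᵢ)²` is the Dirichlet energy of the cycle and `P = ∑_{s ∣ i} vᵢ²`.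
Within a block of `s` consecutive vertices, each value differs from the value at the
block's first vertex (a multiple of `s`) by a sum of fewer than `s` increments, so
Cauchy–Schwarz gives the Poincaré inequality `N ≤ 2sP + 2s²E ≤ 4s²(E / 2 + P)`.
Hence every eigenvalue is at least `1 / (4s²)`, and this dominates
`(1 - cos (π / (2s + 1))) / 8 ≤ π² / (16 (2s + 1)²)`.
-/

open Finset Fin.NatCast

section Poincare

variable (w : ℕ → ℝ)

theorem sq_le_two_mul_sq_add_two_mul_sum_sq_sub (a j : ℕ) :
    w (a + j) ^ 2 ≤ 2 * w a ^ 2 + 2 * j * ∑ t ∈ range j, (w (a + t + 1) - w (a + t)) ^ 2 := by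
  have htel : w (a + j) = w a + ∑ t ∈ range j, (w (a + t + 1) - w (a + t)) := by
    have := sum_range_sub (fun t => w (a + t)) j
    simp only [← add_assoc, add_zero] at this
    linarith
  have hcs := sq_sum_le_card_mul_sum_sq (s := range j) (f := fun t => w (a + t + 1) - w (a + t))
  rw [card_range] at hcs
  rw [htel]
  nlinarith [sq_nonneg (w a - ∑ t ∈ range j, (w (a + t + 1) - w (a + t)))]

theorem sum_range_sq_le (a s : ℕ) :
    ∑ j ∈ range s, w (a + j) ^ 2 ≤
      2 * s * w a ^ 2 + 2 * s ^ 2 * ∑ t ∈ range s, (w (a + t + 1) - w (a + t)) ^ 2 := by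
  set D := ∑ t ∈ range s, (w (a + t + 1) - w (a + t)) ^ 2
  calc ∑ j ∈ range s, w (a + j) ^ 2 ≤ ∑ _j ∈ range s, (2 * w a ^ 2 + 2 * s * D) := by
        refine sum_le_sum fun j hj => ?_
        have hjs : j ≤ s := (mem_range.mp hj).le
        have hDj : ∑ t ∈ range j, (w (a + t + 1) - w (a + t)) ^ 2 ≤ D :=
          sum_le_sum_of_subset_of_nonneg (range_subset_range.mpr hjs) fun _ _ _ => sq_nonneg _
        have hD : 0 ≤ ∑ t ∈ range j, (w (a + t + 1) - w (a + t)) ^ 2 :=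
          sum_nonneg fun _ _ => sq_nonneg _
        have hjs' : (j : ℝ) ≤ s := by exact_mod_cast hjs
        nlinarith [sq_le_two_mul_sq_add_two_mul_sum_sq_sub w a j]
    _ = 2 * s * w a ^ 2 + 2 * s ^ 2 * D := by
        rw [sum_const, card_range, nsmul_eq_mul]
        ring

theorem sum_range_ite_dvd_add {s : ℕ} (hs : 0 < s) {a : ℕ} (ha : s ∣ a) (f : ℕ → ℝ) :
    ∑ j ∈ range s, (if s ∣ a + j then f (a + j) else 0) = f a := by
  rw [sum_eq_single_of_mem 0 (mem_range.mpr hs)]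
  · simp [ha]
  · intro j hj hj0
    have hndvd : ¬ s ∣ a + j := fun h =>
      Nat.not_dvd_of_pos_of_lt (Nat.pos_of_ne_zero hj0) (mem_range.mp hj)
        ((Nat.dvd_add_right ha).mp h)
    simp [hndvd]

theorem sum_range_mul_sq_le (r : ℕ) {s : ℕ} (hs : 0 < s) :
    ∑ n ∈ range (r * s), w n ^ 2 ≤
      2 * s * ∑ n ∈ range (r * s), (if s ∣ n then w n ^ 2 else 0) +
        2 * s ^ 2 * ∑ n ∈ range (r * s), (w (n + 1) - w n) ^ 2 := by
  induction r with
  | zero => simp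
  | succ r ih =>
    rw [Nat.succ_mul, sum_range_add, sum_range_add, sum_range_add,
      sum_range_ite_dvd_add hs (dvd_mul_left s r) (fun n => w n ^ 2)]
    nlinarith [sum_range_sq_le w (r * s) s]

end Poincare

theorem sum_fin_mul_sq_le (r : ℕ) {s : ℕ} (hs : 0 < s) [NeZero (r * s)]
    (v : Fin (r * s) → ℝ) :
    ∑ i, v i ^ 2 ≤
      2 * s * ∑ i : Fin (r * s), (if s ∣ i.val then v i ^ 2 else 0) +
        2 * s ^ 2 * ∑ i, (v (i + 1) - v i) ^ 2 := by
  have := sum_range_mul_sq_le (fun n : ℕ => v n) r hs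
  simpa only [← Fin.sum_univ_eq_sum_range, Nat.cast_succ, Fin.cast_val_eq_self] using this

theorem periodicDiag_eq_diagonal (L s : ℕ) :
    periodicDiag L s = diagonal fun i => if s ∣ i.val then 1 else 0 := by
  ext i j
  by_cases hij : i = j <;> simp [periodicDiag, diagonal, hij]

theorem dotProduct_periodicDiag_mulVec (L s : ℕ) (v : Fin L → ℝ) :
    v ⬝ᵥ (periodicDiag L s *ᵥ v) = ∑ i, if s ∣ i.val then v i ^ 2 else 0 := by
  simp only [periodicDiag_eq_diagonal, dotProduct, mulVec_diagonal]
  refine sum_congr rfl fun i _ => ?_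
  split_ifs <;> ring

section Cycle

variable {L : ℕ} [NeZero L]

theorem cycleMat_apply (hL : 2 ≤ L) (i j : Fin L) :
    cycleMat L i j = (if i = j then 1 else 0) -
      ((if i + 1 = j then 1 / 2 else 0) + (if j + 1 = i then 1 / 2 else 0)) := by
  have hsucc : ∀ a b : Fin L, (a.val + 1) % L = b.val ↔ a + 1 = b := by
    intro a b
    rw [Fin.ext_iff, Fin.val_add, Fin.val_one', Nat.add_mod_mod]
  by_cases hij : i = j
  · subst hij
    have hne : i + 1 ≠ i := fun h => by
      have h1 := congrArg Fin.val (add_eq_left.mp h)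
      rw [Fin.val_one', Nat.mod_eq_of_lt hL, Fin.val_zero] at h1
      exact one_ne_zero h1
    simp [cycleMat, hne]
  · simp only [cycleMat, of_apply, hij, if_false, hsucc]
    split_ifs <;> norm_num

theorem dotProduct_cycleMat_mulVec (hL : 2 ≤ L) (v : Fin L → ℝ) :
    v ⬝ᵥ (cycleMat L *ᵥ v) = 1 / 2 * ∑ i, (v (i + 1) - v i) ^ 2 := by
  have hrow : ∀ i, (cycleMat L *ᵥ v) i = v i - (v (i + 1) + v (i - 1)) / 2 := by
    intro i
    have hpred : ∀ j : Fin L, j + 1 = i ↔ j = i - 1 := fun j => eq_sub_iff_add_eq.symm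
    simp only [mulVec, dotProduct, cycleMat_apply hL, hpred]
    simp only [sub_mul, add_mul, ite_mul, one_mul, zero_mul, sum_sub_distrib, sum_add_distrib,
      sum_ite_eq, sum_ite_eq', mem_univ, if_true]
    ring
  have hshift : ∀ f : Fin L → ℝ, ∑ i, f (i + 1) = ∑ i, f i :=
    fun f => Equiv.sum_comp (Equiv.addRight 1) f
  have hback : ∑ i, v i * v (i - 1) = ∑ i, v i * v (i + 1) := by
    rw [← hshift fun i => v i * v (i - 1)]
    simp only [add_sub_cancel_right, mul_comm]
  have hsq : ∑ i, v (i + 1) ^ 2 = ∑ i, v i ^ 2 := hshift fun i => v i ^ 2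
  calc v ⬝ᵥ (cycleMat L *ᵥ v)
      = ∑ i, v i ^ 2 - (∑ i, v i * v (i + 1) + ∑ i, v i * v (i - 1)) / 2 := by
        simp only [dotProduct, hrow]
        rw [← sum_add_distrib, sum_div, ← sum_sub_distrib]
        exact sum_congr rfl fun i _ => by ring
    _ = 1 / 2 * (∑ i, v (i + 1) ^ 2 + ∑ i, v i ^ 2 - 2 * ∑ i, v i * v (i + 1)) := by
        rw [hback, hsq]; ring
    _ = 1 / 2 * ∑ i, (v (i + 1) - v i) ^ 2 := by
        rw [mul_sum, ← sum_add_distrib, ← sum_sub_distrib]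
        exact congrArg _ (sum_congr rfl fun i _ => by ring)

theorem half_sum_sq_sub_le_dotProduct_cycleMat_mulVec (v : Fin L → ℝ) :
    1 / 2 * ∑ i, (v (i + 1) - v i) ^ 2 ≤ v ⬝ᵥ (cycleMat L *ᵥ v) := by
  -- for `L = 1` the matrix is `1` while the energy vanishes
  obtain rfl | hL : L = 1 ∨ 2 ≤ L := by have := NeZero.pos L; omega
  · simp [dotProduct, mulVec, cycleMat, mul_self_nonneg]
  · exact (dotProduct_cycleMat_mulVec hL v).ge

end Cycle

theorem one_div_eight_mul_one_sub_cos_le {x : ℝ} (hx : 0 < x) :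
    1 / 8 * (1 - Real.cos (Real.pi / (2 * x + 1))) ≤ 1 / (4 * x ^ 2) := by
  have hcos := Real.one_sub_sq_div_two_le_cos (x := Real.pi / (2 * x + 1))
  have hpi : Real.pi * x ≤ 2 * (2 * x + 1) := by nlinarith [Real.pi_le_four]
  have hbound : (Real.pi / (2 * x + 1)) ^ 2 ≤ 4 / x ^ 2 := by
    rw [div_pow, div_le_div_iff₀ (by positivity) (by positivity)]
    nlinarith [mul_le_mul hpi hpi (by positivity) (by positivity)]
  have : 1 / (4 * x ^ 2) = (4 / x ^ 2) / 16 := by field_simp; ring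
  rw [this]
  linarith

/-- For `L = r * s`, the smallest eigenvalue of `C_L + D_{r,s,0}` is at least
`(1/8)(1 - cos(π/(2s+1)))`. -/
theorem stmt0 (r s : ℕ) (hr : 0 < r) (hs : 0 < s) (L : ℕ) (hL : L = r * s)
    (μ : ℝ) (v : Fin L → ℝ) (hv : v ≠ 0)
    (heig : (cycleMat L + periodicDiag L s).mulVec v = μ • v) :
    (1/8) * (1 - Real.cos (Real.pi / (2 * (s : ℝ) + 1))) ≤ μ := by
  subst hL
  have : NeZero (r * s) := ⟨(Nat.mul_pos hr hs).ne'⟩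
  have hN : 0 < ∑ i, v i ^ 2 := by
    obtain ⟨i, hi⟩ := Function.ne_iff.mp hv
    exact sum_pos' (fun _ _ => sq_nonneg _) ⟨i, mem_univ _, pow_two_pos_of_ne_zero hi⟩
  have hP : 0 ≤ ∑ i : Fin (r * s), (if s ∣ i.val then v i ^ 2 else 0) :=
    sum_nonneg fun _ _ => by positivity
  have hvv : v ⬝ᵥ v = ∑ i, v i ^ 2 := by simp only [dotProduct, sq]
  have hrayleigh := congrArg (v ⬝ᵥ ·) heig
  simp only [add_mulVec, dotProduct_add, dotProduct_smul, dotProduct_periodicDiag_mulVec,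
    smul_eq_mul, hvv] at hrayleigh
  have hcycle := half_sum_sq_sub_le_dotProduct_cycleMat_mulVec v
  have hpoincare := sum_fin_mul_sq_le r hs v
  have hs1 : (1 : ℝ) ≤ s := by exact_mod_cast hs
  have hμ : 1 / (4 * (s : ℝ) ^ 2) ≤ μ := by
    rw [div_le_iff₀ (by positivity)]
    refine one_le_of_le_mul_right₀ hN ?_
    nlinarith [mul_nonneg (by nlinarith : (0 : ℝ) ≤ 2 * s ^ 2 - s) hP]
  exact (one_div_eight_mul_one_sub_cos_le (by positivity)).trans hμ
end

section
/- For all real $\theta$ with $0 \leq \theta < 1$ and all real $c \geq 1$: $1 - \cos(\theta/c) \leq \frac{2}{c^2}(1 - \cos\theta)$. -/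
/-! Compare both sides with `θ ^ 2`: always `1 - cos y ≤ y ^ 2 / 2`, while for `|θ| ≤ 1` the
Taylor bound `cos θ ≤ 1 - θ ^ 2 / 2 + (5 / 96) θ ^ 4` gives `θ ^ 2 / 4 ≤ 1 - cos θ`. -/

open Real

lemma Real.one_sub_cos_le_sq_div_two (x : ℝ) : 1 - cos x ≤ x ^ 2 / 2 := by
  linarith [one_sub_sq_div_two_le_cos (x := x)]

lemma Real.sq_div_four_le_one_sub_cos {x : ℝ} (hx : |x| ≤ 1) : x ^ 2 / 4 ≤ 1 - cos x := by
  have hcos : cos x ≤ 1 - x ^ 2 / 2 + |x| ^ 4 * (5 / 96) := by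
    linarith [(abs_le.mp (cos_bound hx)).2]
  have hsq : x ^ 2 ≤ 1 := by rw [← sq_abs]; exact pow_le_one₀ (abs_nonneg x) hx
  have hquartic : |x| ^ 4 ≤ x ^ 2 := by
    rw [show |x| ^ 4 = x ^ 2 * x ^ 2 by rw [← sq_abs x]; ring]
    exact mul_le_of_le_one_right (sq_nonneg x) hsq
  linarith [sq_nonneg x]

theorem stmt4_general (θ c : ℝ) (hθ0 : 0 ≤ θ) (hθ1 : θ < 1) :
    1 - Real.cos (θ / c) ≤ (2 / c ^ 2) * (1 - Real.cos θ) := by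
  have hθ : |θ| ≤ 1 := abs_le.2 ⟨by linarith, hθ1.le⟩
  calc 1 - cos (θ / c) ≤ (θ / c) ^ 2 / 2 := one_sub_cos_le_sq_div_two _
    _ = 2 / c ^ 2 * (θ ^ 2 / 4) := by ring
    _ ≤ 2 / c ^ 2 * (1 - cos θ) := by gcongr; exact sq_div_four_le_one_sub_cos hθ

/-- For `0 ≤ θ < 1` and `c ≥ 1`: `1 - cos(θ/c) ≤ (2/c²)(1 - cos θ)`. -/
theorem stmt4 (θ c : ℝ) (hθ0 : 0 ≤ θ) (hθ1 : θ < 1) (hc : 1 ≤ c) :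
    1 - Real.cos (θ / c) ≤ (2 / c ^ 2) * (1 - Real.cos θ) :=
  stmt4_general θ c hθ0 hθ1
end

section
/- If $x$, $x'$, and $y$ are integers greater than $5$ with $x \neq x'$, then $|\cos(\pi/(yx+1)) - \cos(\pi/(yx'+1))| \geq \frac{1}{y^2 x^4}$. -/
/-!
Write `cos b - cos a = 2 sin((a+b)/2) sin((a-b)/2)` and bound both sines from below by Jordan's
inequality `sin t ≥ 2t/π`: for `a = π/p`, `b = π/q` this gives
`cos(π/q) - cos(π/p) ≥ 2 (1/p² - 1/q²)`. With `p = yx + 1` and `q = yx' + 1 ≥ p + y`, the right-hand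
side is at least `2y(2p + y)/(p²(p + y)²) ≥ 1/(4y²x³)`, which dominates `1/(y²x⁴)` as soon as `x ≥ 4`.
-/

open Real

lemma two_div_pi_sq_mul_sub_le_cos_sub_cos {a b : ℝ} (hb : 0 ≤ b) (hba : b ≤ a)
    (hab : a + b ≤ π) : 2 / π ^ 2 * (a ^ 2 - b ^ 2) ≤ cos b - cos a := by
  have hsum : 2 / π * ((a + b) / 2) ≤ sin ((a + b) / 2) := mul_le_sin (by linarith) (by linarith)
  have hdiff : 2 / π * ((a - b) / 2) ≤ sin ((a - b) / 2) := mul_le_sin (by linarith) (by linarith)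
  have hsum_nonneg : 0 ≤ 2 / π * ((a + b) / 2) :=
    mul_nonneg (by have := pi_pos; positivity) (by linarith)
  have hdiff_nonneg : 0 ≤ 2 / π * ((a - b) / 2) :=
    mul_nonneg (by have := pi_pos; positivity) (by linarith)
  calc 2 / π ^ 2 * (a ^ 2 - b ^ 2)
      = 2 * (2 / π * ((a + b) / 2)) * (2 / π * ((a - b) / 2)) := by field_simp; ring
    _ ≤ 2 * sin ((a + b) / 2) * sin ((a - b) / 2) := by gcongr; linarith
    _ = cos b - cos a := by rw [cos_sub_cos, add_comm b a, ← neg_sub a b, neg_div, sin_neg]; ring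

lemma two_mul_one_div_sq_sub_one_div_sq_le_cos_pi_div_sub {p q : ℝ} (hp : 2 ≤ p) (hpq : p ≤ q) :
    2 * (1 / p ^ 2 - 1 / q ^ 2) ≤ cos (π / q) - cos (π / p) := by
  have hp0 : 0 < p := by linarith
  have hq0 : 0 < q := by linarith
  have hle : π / q ≤ π / p := div_le_div_of_nonneg_left pi_pos.le hp0 hpq
  have hhalf : π / p ≤ π / 2 := div_le_div_of_nonneg_left pi_pos.le two_pos hp
  convert two_div_pi_sq_mul_sub_le_cos_sub_cos (by positivity) hle (by linarith) using 1
  field_simp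

lemma one_div_sq_mul_pow_four_le {X Y q : ℝ} (hX : 4 ≤ X) (hY : 1 ≤ Y)
    (hq : Y * (X + 1) + 1 ≤ q) :
    1 / (Y ^ 2 * X ^ 4) ≤ 2 * (1 / (Y * X + 1) ^ 2 - 1 / q ^ 2) := by
  set p := Y * X + 1
  set r := Y * (X + 1) + 1
  have hp0 : 0 < p := by positivity
  have hp : p ≤ 2 * Y * X := by nlinarith
  have hr : r ≤ 2 * Y * X := by nlinarith
  have hq_mono : 1 / q ^ 2 ≤ 1 / r ^ 2 := by gcongr
  have hr0 : 0 < r := by positivity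
  have hpr : 2 * (1 / p ^ 2 - 1 / r ^ 2) = 2 * Y * (2 * p + Y) / (p ^ 2 * r ^ 2) := by
    field_simp; ring
  have hden : p ^ 2 * r ^ 2 ≤ 16 * Y ^ 4 * X ^ 4 := by
    calc p ^ 2 * r ^ 2 ≤ (2 * Y * X) ^ 2 * (2 * Y * X) ^ 2 := by gcongr
      _ = 16 * Y ^ 4 * X ^ 4 := by ring
  have hnum : 16 * Y ^ 4 * X ^ 4 ≤ 2 * Y * (2 * p + Y) * (Y ^ 2 * X ^ 4) := by
    have : 8 * Y ^ 4 * X ^ 4 ≤ 2 * Y ^ 4 * X ^ 5 := by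
      have : 0 ≤ Y ^ 4 * X ^ 4 := by positivity
      nlinarith
    nlinarith [show 0 ≤ Y ^ 3 * X ^ 4 by positivity]
  calc 1 / (Y ^ 2 * X ^ 4) ≤ 2 * Y * (2 * p + Y) / (p ^ 2 * r ^ 2) := by
        rw [div_le_div_iff₀ (by positivity) (by positivity)]; linarith
    _ = 2 * (1 / p ^ 2 - 1 / r ^ 2) := hpr.symm
    _ ≤ 2 * (1 / p ^ 2 - 1 / q ^ 2) := by linarith

lemma one_div_le_abs_cos_pi_div_sub_of_lt {x x' y : ℤ} (hx : 5 < x) (hy : 5 < y) (hlt : x < x') :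
    1 / ((y : ℝ) ^ 2 * (x : ℝ) ^ 4) ≤
      |cos (π / ((y : ℝ) * (x : ℝ) + 1)) - cos (π / ((y : ℝ) * (x' : ℝ) + 1))| := by
  have hX : (6 : ℝ) ≤ x := by exact_mod_cast hx
  have hY : (6 : ℝ) ≤ y := by exact_mod_cast hy
  have hXX' : (x : ℝ) + 1 ≤ x' := by exact_mod_cast hlt
  have hq : (y : ℝ) * (x + 1) + 1 ≤ y * x' + 1 := by gcongr
  rw [abs_sub_comm]
  refine (one_div_sq_mul_pow_four_le (by linarith) (by linarith) hq).trans ?_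
  refine (two_mul_one_div_sq_sub_one_div_sq_le_cos_pi_div_sub (by nlinarith) (by nlinarith)).trans ?_
  exact le_abs_self _

/-- If `x`, `x'`, `y` are integers greater than `5` and `x ≠ x'`, then
`|cos(π/(yx+1)) - cos(π/(yx'+1))| ≥ 1/(y²x⁴)`. -/
theorem stmt5 (x x' y : ℤ) (hx : 5 < x) (hx' : 5 < x') (hy : 5 < y) (hne : x ≠ x') :
    1 / ((y : ℝ) ^ 2 * (x : ℝ) ^ 4) ≤
      |Real.cos (Real.pi / ((y : ℝ) * (x : ℝ) + 1)) -
        Real.cos (Real.pi / ((y : ℝ) * (x' : ℝ) + 1))| := by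
  rcases hne.lt_or_gt with hlt | hgt
  · exact one_div_le_abs_cos_pi_div_sub_of_lt hx hy hlt
  · have hX' : (5 : ℝ) < x' := by exact_mod_cast hx'
    have hle : (x' : ℝ) ≤ x := by exact_mod_cast hgt.le
    calc 1 / ((y : ℝ) ^ 2 * (x : ℝ) ^ 4) ≤ 1 / ((y : ℝ) ^ 2 * (x' : ℝ) ^ 4) := by
          have : (5 : ℝ) < y := by exact_mod_cast hy
          gcongr
      _ ≤ _ := one_div_le_abs_cos_pi_div_sub_of_lt hx' hy hgt
      _ = _ := abs_sub_comm _ _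
end

section
/- Define $N(x) = 5\,n(x^R) - 2\,w(x) - 4\,(n(x^R) \bmod 2)$, where $x$ is a binary string ending in $1$, $x^R$ is its reverse, $n(z)$ is the number represented by binary string $z$, and $w(x)$ is the number of ones in $x$. Then for every binary string $x$ of length at least $2$ ending in $1$, $N(x) \geq 2^{|x|}$. -/
/-!
With `n = n(x^R)` and `w = w(x)`: the last bit of `x` gives `2^|x| ≤ 2n`, and a number with `w`
binary ones is at least `2^w - 1 ≥ 2w - 1`, so `2w ≤ n + 1`. It remains to check
`n + 1 + 4 (n mod 2) ≤ 3n`, which holds because `n ≥ 2`, and even `n ≥ 3` when `n` is odd.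
-/

/-- `n(x^R)`: the numerical value of the reverse of the binary string `x`,
i.e. the value of `x` read in little-endian order (first character = least significant bit). -/
def revVal (x : List Bool) : ℕ :=
  ∑ i : Fin x.length, if x.get i then 2 ^ (i : ℕ) else 0

theorem Nat.two_mul_le_two_pow (n : ℕ) : 2 * n ≤ 2 ^ n := by
  cases n with
  | zero => simp
  | succ k =>
    have := Nat.lt_two_pow_self (n := k)
    rw [pow_succ]
    omega

@[simp]
lemma revVal_nil : revVal [] = 0 := rfl

lemma revVal_cons (b : Bool) (l : List Bool) :
    revVal (b :: l) = b.toNat + 2 * revVal l := by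
  change (∑ i : Fin (l.length + 1), if (b :: l).get i then 2 ^ (i : ℕ) else 0) = _
  rw [Fin.sum_univ_succ]
  cases b <;> simp [revVal, Finset.mul_sum, pow_succ, mul_comm]

lemma revVal_append (l₁ l₂ : List Bool) :
    revVal (l₁ ++ l₂) = revVal l₁ + 2 ^ l₁.length * revVal l₂ := by
  induction l₁ with
  | nil => simp
  | cons b l ih =>
    simp only [List.cons_append, revVal_cons, ih, List.length_cons, pow_succ]
    ring

lemma two_pow_pred_length_le_revVal {x : List Bool} (hlast : x.getLast? = some true) :
    2 ^ (x.length - 1) ≤ revVal x := by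
  obtain ⟨l, rfl⟩ := List.getLast?_eq_some_iff.mp hlast
  simp [revVal_append, revVal_cons]

lemma two_pow_count_true_le_revVal_add_one (x : List Bool) :
    2 ^ x.count true ≤ revVal x + 1 := by
  induction x with
  | nil => simp
  | cons b l ih =>
    cases b <;> simp [revVal_cons, pow_succ] <;> omega

/-- For every binary string `x` of length at least `2` ending in `1`,
`N(x) = 5 n(x^R) - 2 w(x) - 4 (n(x^R) mod 2) ≥ 2^|x|`, where `w(x)` is the number of ones. -/
theorem stmt7 (x : List Bool) (hlen : 2 ≤ x.length) (hlast : x.getLast? = some true) :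
    (2 : ℤ) ^ x.length ≤
      5 * (revVal x : ℤ) - 2 * (x.count true : ℤ) - 4 * ((revVal x : ℤ) % 2) := by
  set n := revVal x
  set w := x.count true
  have hlead : 2 ^ (x.length - 1) ≤ n := two_pow_pred_length_le_revVal hlast
  have hpow : 2 ^ x.length = 2 * 2 ^ (x.length - 1) := by
    rw [← pow_succ', Nat.sub_add_cancel (by omega)]
  have htwo : 2 ≤ 2 ^ (x.length - 1) :=
    Nat.le_self_pow (by omega) 2
  have hw : 2 * w ≤ n + 1 :=
    (Nat.two_mul_le_two_pow w).trans (two_pow_count_true_le_revVal_add_one x)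
  have key : 2 ^ x.length + 2 * w + 4 * (n % 2) ≤ 5 * n := by omega
  zify at key
  linarith
end

section
/- Recovering an integer from an approximate eigenvalue: let $y \geq 40$ be an integer and suppose $T, T' \in \{4, 5, \ldots, M\}$ are integers with $T \neq T'$. Define $g(T) = 1 - \cos\left(\frac{\pi}{(2T+1)y + 1}\right)$. If $E$ is a real number with $|E - g(T)| \leq \frac{1}{2 y^2 (2M+1)^4}$, then $T$ is the unique integer in $\{4, \ldots, M\}$ with $|E - g(T)| \leq \frac{1}{2 y^2 (2M+1)^4}$; i.e., $|g(T) - g(T')| \geq \frac{1}{y^2 (2M+1)^4}$ for $T \neq T'$. -/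
/-!
By `cos u - cos v = 2 sin ((u + v) / 2) sin ((v - u) / 2)` and Jordan's inequality
`sin t ≥ 2 t / π`, one gets `cos (π / b) - cos (π / a) ≥ 2 (1 / a² - 1 / b²)` for `2 ≤ a ≤ b`,
with `π` cancelling. For `a = (2S + 1) y + 1 < b = (2S' + 1) y + 1` the right side is of order
`y / b³`, strictly above `1 / (y² (2M + 1)⁴)`. A strict gap of that size between the values `g S`
makes an estimate within half of it determine `S`, by the triangle inequality.
-/

open Real

theorem two_div_sq_pi_mul_sq_sub_sq_le_cos_sub_cos {u v : ℝ} (hu : 0 ≤ u) (huv : u ≤ v)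
    (hvu : u + v ≤ π) :
    2 / π ^ 2 * (v ^ 2 - u ^ 2) ≤ cos u - cos v := by
  have hsum : 2 / π * ((u + v) / 2) ≤ sin ((u + v) / 2) := mul_le_sin (by linarith) (by linarith)
  have hdiff : 2 / π * ((v - u) / 2) ≤ sin ((v - u) / 2) :=
    mul_le_sin (by linarith) (by linarith)
  have hprod := mul_le_mul hsum hdiff (by positivity)
    (sin_nonneg_of_nonneg_of_le_pi (by linarith) (by linarith))
  calc 2 / π ^ 2 * (v ^ 2 - u ^ 2) = 2 * (2 / π * ((u + v) / 2) * (2 / π * ((v - u) / 2))) := by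
        field_simp; ring
    _ ≤ 2 * (sin ((u + v) / 2) * sin ((v - u) / 2)) := by linarith
    _ = cos u - cos v := by
        rw [cos_sub_cos, ← neg_sub v u, neg_div, sin_neg]; ring

theorem two_mul_inv_sq_sub_inv_sq_le_cos_sub_cos {a b : ℝ} (ha : 2 ≤ a) (hab : a ≤ b) :
    2 * (1 / a ^ 2 - 1 / b ^ 2) ≤ cos (π / b) - cos (π / a) := by
  have hπ := pi_pos
  have hle : π / b ≤ π / a := div_le_div_of_nonneg_left hπ.le (by linarith) hab
  have hsum : π / b + π / a ≤ π := by
    have : π / b ≤ π / 2 := div_le_div_of_nonneg_left hπ.le (by norm_num) (by linarith)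
    have : π / a ≤ π / 2 := div_le_div_of_nonneg_left hπ.le (by norm_num) ha
    linarith
  convert two_div_sq_pi_mul_sq_sub_sq_le_cos_sub_cos (div_pos hπ (by linarith)).le hle hsum using 1
  field_simp

theorem two_mul_sub_div_cube_le_inv_sq_sub_inv_sq {a b : ℝ} (ha : 0 < a) (hab : a ≤ b) :
    2 * (b - a) / b ^ 3 ≤ 1 / a ^ 2 - 1 / b ^ 2 := by
  have hb : 0 < b := ha.trans_le hab
  rw [div_sub_div _ _ (by positivity) (by positivity),
    div_le_div_iff₀ (by positivity) (by positivity)]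
  have : 0 ≤ (b - a) ^ 2 * b ^ 2 * (b + 2 * a) := by positivity
  linear_combination this

theorem one_div_lt_cos_sub_cos {x x' y : ℝ} (hy : 1 ≤ y) (hx : 1 ≤ x) (hxx' : x + 2 ≤ x') :
    1 / (y ^ 2 * x' ^ 4) < cos (π / (x' * y + 1)) - cos (π / (x * y + 1)) := by
  have hy0 : 0 < y := by linarith
  have hx'0 : 0 < x' := by linarith
  have ha : 2 ≤ x * y + 1 := by nlinarith
  have hb0 : 0 < x' * y + 1 := by positivity
  have hgap : 2 * y ≤ (x' * y + 1) - (x * y + 1) := by nlinarith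
  calc 1 / (y ^ 2 * x' ^ 4) < 8 * y / (x' * y + 1) ^ 3 := by
        rw [div_lt_div_iff₀ (by positivity) (by positivity)]
        calc 1 * (x' * y + 1) ^ 3 ≤ (2 * (x' * y)) ^ 3 := by rw [one_mul]; gcongr; nlinarith
          _ < 8 * y * (y ^ 2 * x' ^ 4) := by
            have : 0 < y ^ 3 * x' ^ 3 := by positivity
            nlinarith
    _ ≤ 2 * (2 * ((x' * y + 1) - (x * y + 1)) / (x' * y + 1) ^ 3) := by
        rw [mul_div_assoc']; exact div_le_div_of_nonneg_right (by linarith) (by positivity)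
    _ ≤ 2 * (1 / (x * y + 1) ^ 2 - 1 / (x' * y + 1) ^ 2) := by
        gcongr; exact two_mul_sub_div_cube_le_inv_sq_sub_inv_sq (by linarith) (by nlinarith)
    _ ≤ cos (π / (x' * y + 1)) - cos (π / (x * y + 1)) :=
        two_mul_inv_sq_sub_inv_sq_le_cos_sub_cos ha (by nlinarith)

theorem one_div_lt_abs_cos_sub_cos {y M S S' : ℕ} (hy : 1 ≤ y) (hS : S ≤ M) (hS' : S' ≤ M)
    (hne : S ≠ S') :
    1 / ((y : ℝ) ^ 2 * (2 * (M : ℝ) + 1) ^ 4) <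
      |cos (π / ((2 * (S : ℝ) + 1) * y + 1)) - cos (π / ((2 * (S' : ℝ) + 1) * y + 1))| := by
  wlog hlt : S < S' generalizing S S'
  · rw [abs_sub_comm]; exact this hS' hS hne.symm (lt_of_le_of_ne (not_lt.1 hlt) hne.symm)
  have hS'M : (2 * (S' : ℝ) + 1) ≤ 2 * M + 1 := by gcongr
  calc 1 / ((y : ℝ) ^ 2 * (2 * (M : ℝ) + 1) ^ 4)
        ≤ 1 / ((y : ℝ) ^ 2 * (2 * (S' : ℝ) + 1) ^ 4) := by gcongr
    _ < cos (π / ((2 * (S' : ℝ) + 1) * y + 1)) - cos (π / ((2 * (S : ℝ) + 1) * y + 1)) :=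
        one_div_lt_cos_sub_cos (by exact_mod_cast hy) (by linarith [S.cast_nonneg (α := ℝ)])
          (by have : (S : ℝ) + 1 ≤ S' := by exact_mod_cast hlt
              linarith)
    _ ≤ _ := by rw [abs_sub_comm]; exact le_abs_self _

theorem stmt19_general (y M T T' : ℕ) (hy : 40 ≤ y)
    (hTM : T ≤ M) (hT'M : T' ≤ M) (hne : T ≠ T')
    (g : ℕ → ℝ)
    (hg : ∀ t : ℕ, g t = 1 - Real.cos (Real.pi / ((2 * (t : ℝ) + 1) * (y : ℝ) + 1))) :
    (1 / ((y : ℝ) ^ 2 * (2 * (M : ℝ) + 1) ^ 4) ≤ |g T - g T'|) ∧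
    (∀ E : ℝ, |E - g T| ≤ 1 / (2 * (y : ℝ) ^ 2 * (2 * (M : ℝ) + 1) ^ 4) →
      ∀ T'' : ℕ, 4 ≤ T'' → T'' ≤ M →
        |E - g T''| ≤ 1 / (2 * (y : ℝ) ^ 2 * (2 * (M : ℝ) + 1) ^ 4) → T'' = T) := by
  have hsep : ∀ S S', S ≤ M → S' ≤ M → S ≠ S' →
      1 / ((y : ℝ) ^ 2 * (2 * (M : ℝ) + 1) ^ 4) < |g S - g S'| := by
    intro S S' hS hS' hSS'
    rw [hg, hg, sub_sub_sub_cancel_left, abs_sub_comm]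
    exact one_div_lt_abs_cos_sub_cos (by omega) hS hS' hSS'
  refine ⟨(hsep T T' hTM hT'M hne).le, fun E hE T'' _ hT''M hE'' => ?_⟩
  by_contra hT''
  have hfar := hsep T'' T hT''M hTM hT''
  have hnear : |g T'' - g T| ≤ |E - g T''| + |E - g T| := by
    simpa only [abs_sub_comm E] using abs_sub_le (g T'') E (g T)
  have hhalf : 1 / (2 * (y : ℝ) ^ 2 * (2 * (M : ℝ) + 1) ^ 4) =
      1 / ((y : ℝ) ^ 2 * (2 * (M : ℝ) + 1) ^ 4) / 2 := by
    field_simp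
  linarith

/-- Recovering an integer from an approximate eigenvalue: for an integer `y ≥ 40` and
`g(T) = 1 - cos(π/((2T+1)y+1))`, distinct integers `T, T' ∈ {4,…,M}` satisfy
`|g(T) - g(T')| ≥ 1/(y²(2M+1)⁴)`; consequently, any `E` with
`|E - g(T)| ≤ 1/(2y²(2M+1)⁴)` determines `T` uniquely among `{4,…,M}`. -/
theorem stmt19 (y M T T' : ℕ) (hy : 40 ≤ y)
    (hT4 : 4 ≤ T) (hTM : T ≤ M) (hT'4 : 4 ≤ T') (hT'M : T' ≤ M) (hne : T ≠ T')
    (g : ℕ → ℝ)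
    (hg : ∀ t : ℕ, g t = 1 - Real.cos (Real.pi / ((2 * (t : ℝ) + 1) * (y : ℝ) + 1))) :
    (1 / ((y : ℝ) ^ 2 * (2 * (M : ℝ) + 1) ^ 4) ≤ |g T - g T'|) ∧
    (∀ E : ℝ, |E - g T| ≤ 1 / (2 * (y : ℝ) ^ 2 * (2 * (M : ℝ) + 1) ^ 4) →
      ∀ T'' : ℕ, 4 ≤ T'' → T'' ≤ M →
        |E - g T''| ≤ 1 / (2 * (y : ℝ) ^ 2 * (2 * (M : ℝ) + 1) ^ 4) → T'' = T) :=
  stmt19_general y M T T' hy hTM hT'M hne g hg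
end
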